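/- Let α > 0, β > 0, ε ∈ (0, β/2], and let χ : ℝ → [0,1] be smooth, nondecreasing, with χ ≡ 0 on (-∞, ε/(4α)] and χ ≡ 1 on [ε/(2α), ∞). Suppose k, w : X → ℝ are smooth functions on a manifold X with w ≥ 1, and V is a vector field with V k ≥ β and |V w| ≤ α on a set S ⊆ X. Define c = χ(k/w). Then V c ≥ 0 on S. -/

import Mathlib

/-- If a differentiable function is constant on `Set.Iic t`, its derivative at `t` is zero. -/
lemma aux_deriv_zero_Iic {f : ℝ → ℝ} {c t : ℝ} (hd : DifferentiableAt ℝ f t)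
    (h : ∀ s ∈ Set.Iic t, f s = c) : deriv f t = 0 := by
  have h1 : HasDerivWithinAt f 0 (Set.Iic t) t :=
    (hasDerivWithinAt_const t _ c).congr h (h t Set.self_mem_Iic)
  have h2 : HasDerivWithinAt f (deriv f t) (Set.Iic t) t :=
    hd.hasDerivAt.hasDerivWithinAt
  exact ((uniqueDiffOn_Iic t t Set.self_mem_Iic).eq_deriv _ h2 h1)

/-- If a differentiable function is constant on `Set.Ici t`, its derivative at `t` is zero. -/
lemma aux_deriv_zero_Ici {f : ℝ → ℝ} {c t : ℝ} (hd : DifferentiableAt ℝ f t)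
    (h : ∀ s ∈ Set.Ici t, f s = c) : deriv f t = 0 := by
  have h1 : HasDerivWithinAt f 0 (Set.Ici t) t :=
    (hasDerivWithinAt_const t _ c).congr h (h t Set.self_mem_Ici)
  have h2 : HasDerivWithinAt f (deriv f t) (Set.Ici t) t :=
    hd.hasDerivAt.hasDerivWithinAt
  exact ((uniqueDiffOn_Ici t t Set.self_mem_Ici).eq_deriv _ h2 h1)

/-- Let `χ : ℝ → [0,1]` be smooth nondecreasing with `χ ≡ 0` on
`(-∞, ε/(4α)]` and `χ ≡ 1` on `[ε/(2α), ∞)`, where `0 < ε ≤ β/2`, `α, β > 0`. If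
`k, w` are smooth with `w ≥ 1`, and on a set `S` the vector field `V` satisfies
`V k ≥ β` and `|V w| ≤ α`, then `V c ≥ 0` on `S`, where `c = χ(k/w)`. -/
theorem stmt_12
    {E : Type*} [NormedAddCommGroup E] [NormedSpace ℝ E]
    (α β ε : ℝ) (hα : 0 < α) (hβ : 0 < β) (hε : 0 < ε) (hεβ : ε ≤ β / 2)
    (χ : ℝ → ℝ) (hχ : ContDiff ℝ (⊤ : ℕ∞) χ) (hχ01 : ∀ x, χ x ∈ Set.Icc (0 : ℝ) 1)
    (hχmono : Monotone χ)
    (hχ0 : ∀ x ≤ ε / (4 * α), χ x = 0) (hχ1 : ∀ x, ε / (2 * α) ≤ x → χ x = 1)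
    (k w : E → ℝ) (hk : ContDiff ℝ (⊤ : ℕ∞) k) (hw : ContDiff ℝ (⊤ : ℕ∞) w)
    (hw1 : ∀ x, 1 ≤ w x)
    (V : E → E) (S : Set E)
    (hVk : ∀ x ∈ S, β ≤ fderiv ℝ k x (V x))
    (hVw : ∀ x ∈ S, |fderiv ℝ w x (V x)| ≤ α) :
    ∀ x ∈ S, 0 ≤ fderiv ℝ (fun y => χ (k y / w y)) x (V x) := by
  intro x hxS
  have hχd : Differentiable ℝ χ := hχ.differentiable (by simp)
  have hkx : DifferentiableAt ℝ k x := (hk.differentiable (by simp)) x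
  have hwx : DifferentiableAt ℝ w x := (hw.differentiable (by simp)) x
  have hwpos : 0 < w x := lt_of_lt_of_le one_pos (hw1 x)
  have hw0 : w x ≠ 0 := ne_of_gt hwpos
  set g : E → ℝ := fun y => k y / w y with hg_def
  have hgx : DifferentiableAt ℝ g x := by
    rw [hg_def]; simp only [div_eq_mul_inv]; exact hkx.mul (hwx.inv hw0)
  set t : ℝ := g x with ht_def
  -- chain rule
  have hcomp : fderiv ℝ (fun y => χ (k y / w y)) x (V x)
      = deriv χ t * fderiv ℝ g x (V x) := by
    have : fderiv ℝ (χ ∘ g) x = (fderiv ℝ χ t).comp (fderiv ℝ g x) :=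
      fderiv_comp x (hχd t) hgx
    have happ : fderiv ℝ (fun y => χ (k y / w y)) x (V x)
        = fderiv ℝ χ t (fderiv ℝ g x (V x)) := by
      show fderiv ℝ (χ ∘ g) x (V x) = _
      rw [this]; rfl
    rw [happ]
    have hu : fderiv ℝ χ t (fderiv ℝ g x (V x))
        = (fderiv ℝ g x (V x)) • (fderiv ℝ χ t 1) := by
      rw [← (fderiv ℝ χ t).map_smul, smul_eq_mul, mul_one]
    rw [hu, ← fderiv_apply_one_eq_deriv, smul_eq_mul, mul_comm]
  rw [hcomp]
  -- product rule: k = g * w, so fderiv k = g x • fderiv w + w x • fderiv g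
  have hkgw : k = fun y => g y * w y := by
    funext y
    have : w y ≠ 0 := ne_of_gt (lt_of_lt_of_le one_pos (hw1 y))
    simp [hg_def, div_mul_cancel₀ _ this]
  have hmul : HasFDerivAt (fun y => g y * w y)
      (g x • fderiv ℝ w x + w x • fderiv ℝ g x) x :=
    hgx.hasFDerivAt.mul hwx.hasFDerivAt
  have hfk : fderiv ℝ k x = g x • fderiv ℝ w x + w x • fderiv ℝ g x := by
    rw [hkgw]; exact hmul.fderiv
  have hGv : fderiv ℝ g x (V x)
      = (fderiv ℝ k x (V x) - t * fderiv ℝ w x (V x)) / w x := by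
    have := congrArg (fun L : E →L[ℝ] ℝ => L (V x)) hfk
    simp only [ContinuousLinearMap.add_apply, ContinuousLinearMap.smul_apply,
      smul_eq_mul] at this
    field_simp [ht_def]
    linarith [this]
  -- sign analysis
  have hderiv_nonneg : 0 ≤ deriv χ t := by
    have hda := (hχd t).hasDerivAt
    have htend : Filter.Tendsto (slope χ t) (nhdsWithin t (Set.Ioi t)) (nhds (deriv χ t)) :=
      (hasDerivAt_iff_tendsto_slope.mp hda).mono_left
        (nhdsWithin_mono t (fun y hy => ne_of_gt hy))
    refine ge_of_tendsto htend ?_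
    filter_upwards [self_mem_nhdsWithin] with y hy
    rw [slope_def_field]
    have h1 : χ t ≤ χ y := hχmono (le_of_lt hy)
    have h2 : (0:ℝ) < y - t := sub_pos.mpr hy
    exact div_nonneg (by linarith) (le_of_lt h2)
  by_cases h1 : t ≤ ε / (4 * α)
  · have : deriv χ t = 0 :=
      aux_deriv_zero_Iic (hχd t) (fun s hs => hχ0 s (le_trans hs h1))
    simp [this]
  by_cases h2 : ε / (2 * α) ≤ t
  · have : deriv χ t = 0 :=
      aux_deriv_zero_Ici (hχd t) (fun s hs => hχ1 s (le_trans h2 hs))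
    simp [this]
  push_neg at h1 h2
  -- middle case: ε/(4α) < t < ε/(2α)
  have htpos : 0 < t := lt_trans (by positivity) h1
  have hkxpos : 0 < k x := by
    have ht' : 0 < k x / w x := htpos
    rcases div_pos_iff.mp ht' with ⟨h, _⟩ | ⟨_, h⟩
    · exact h
    · linarith
  have hDk : β ≤ fderiv ℝ k x (V x) := hVk x hxS
  have hDw : |fderiv ℝ w x (V x)| ≤ α := hVw x hxS
  have hDw' : fderiv ℝ w x (V x) ≤ α := (abs_le.mp hDw).2
  have htα : t * α ≤ ε / 2 := by
    have := le_of_lt h2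
    calc t * α ≤ (ε / (2 * α)) * α := by nlinarith
    _ = ε / 2 := by field_simp
  have hnum : 0 ≤ fderiv ℝ k x (V x) - t * fderiv ℝ w x (V x) := by
    have h3 : t * fderiv ℝ w x (V x) ≤ t * α := by nlinarith
    nlinarith
  have hgnn : 0 ≤ fderiv ℝ g x (V x) := by
    rw [hGv]; exact div_nonneg hnum (le_of_lt hwpos)
  exact mul_nonneg hderiv_nonneg hgnn
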